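/- arXiv:1811.09249 — 7 statements merged into one kernel-verified Lean document; each statement's English description precedes it below -/
import Mathlib

section
/- Let G be a graph and v a simplicial vertex of G. Then in the complement graph of G, v is not contained in any induced cycle of length at least 5. -/
/-! Let `v = f i` lie on an induced cycle `f` of length `k ≥ 5` in `Gᶜ`. The cycle vertices
`f (i + 2)` and `f (i + 3)` are distinct from `v` and not `Gᶜ`-adjacent to it, so both are
`G`-neighbours of `v`. As `v` is simplicial they are `G`-adjacent, yet they are consecutive on
the cycle and hence `Gᶜ`-adjacent. -/

/-- `f : ZMod k → V` describes an induced cycle of length `k` in `G`. -/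
def IsInducedCycle {V : Type*} (G : SimpleGraph V) (k : ℕ) (f : ZMod k → V) : Prop :=
  Function.Injective f ∧ ∀ i j : ZMod k, G.Adj (f i) (f j) ↔ (j = i + 1 ∨ i = j + 1)

theorem ZMod.natCast_ne_zero_of_pos_of_lt {k n : ℕ} (h0 : 0 < n) (hn : n < k) :
    (n : ZMod k) ≠ 0 := by
  rw [Ne, ZMod.natCast_eq_zero_iff]
  exact fun hdvd => absurd (Nat.le_of_dvd h0 hdvd) (by omega)

namespace IsInducedCycle

variable {V : Type*} {G : SimpleGraph V} {k : ℕ} {f : ZMod k → V}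

theorem adj_add_one (hf : IsInducedCycle G k f) (i : ZMod k) : G.Adj (f i) (f (i + 1)) :=
  (hf.2 i (i + 1)).2 (Or.inl rfl)

theorem ne_add_natCast (hf : IsInducedCycle G k f) {n : ℕ} (h0 : 0 < n) (hn : n < k)
    (i : ZMod k) : f i ≠ f (i + n) := fun h =>
  ZMod.natCast_ne_zero_of_pos_of_lt h0 hn (by simpa using (hf.1 h).symm)

theorem not_adj_add_natCast (hf : IsInducedCycle G k f) {n : ℕ} (h2 : 2 ≤ n) (hn : n + 2 ≤ k)
    (i : ZMod k) : ¬G.Adj (f i) (f (i + n)) := by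
  rw [hf.2]
  rintro (h | h)
  · have h1 : ((n - 1 : ℕ) : ZMod k) = 0 := by
      rw [Nat.cast_sub (by omega), add_left_cancel h, Nat.cast_one, sub_self]
    exact ZMod.natCast_ne_zero_of_pos_of_lt (by omega) (by omega) h1
  · have h1 : ((n + 1 : ℕ) : ZMod k) = 0 := by
      rw [Nat.cast_succ, ← add_right_inj i, ← add_assoc, add_zero, ← h]
    exact ZMod.natCast_ne_zero_of_pos_of_lt (by omega) (by omega) h1

end IsInducedCycle

theorem SimpleGraph.adj_of_not_compl_adj {V : Type*} {G : SimpleGraph V} {u v : V} (h : u ≠ v)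
    (hn : ¬Gᶜ.Adj u v) : G.Adj u v := by
  simpa [SimpleGraph.compl_adj, h] using hn

/-- A vertex that is simplicial in `G` lies in no induced cycle of length at least 5
of the complement of `G`. -/
theorem simplicial_not_in_long_induced_cycle_compl {V : Type*} (G : SimpleGraph V) (v : V)
    (hsimp : G.IsClique (G.neighborSet v)) :
    ∀ k : ℕ, 5 ≤ k → ∀ f : ZMod k → V, IsInducedCycle Gᶜ k f → v ∉ Set.range f := by
  rintro k hk f hf ⟨i, rfl⟩
  have hfar : ∀ n : ℕ, 2 ≤ n → n + 2 ≤ k → G.Adj (f i) (f (i + n)) := fun n h2 hn =>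
    SimpleGraph.adj_of_not_compl_adj (hf.ne_add_natCast (by omega) (by omega) i)
      (hf.not_adj_add_natCast h2 hn i)
  have hedge : Gᶜ.Adj (f (i + (2 : ℕ))) (f (i + (3 : ℕ))) := by
    have h := hf.adj_add_one (i + 2)
    push_cast
    rwa [add_assoc, show (2 + 1 : ZMod k) = 3 by norm_num] at h
  exact hedge.2 (hsimp (hfar 2 le_rfl (by omega)) (hfar 3 (by norm_num) (by omega)) hedge.1)
end

section
/- Let G be a graph on n vertices and suppose v is simplicial in G or has degree at least n-2 in G. Then G is weakly chordal if and only if G - v is weakly chordal. -/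
/-- A graph is weakly chordal if neither it nor its complement contains
an induced cycle of length at least 5. -/
def WeaklyChordal {V : Type*} (G : SimpleGraph V) : Prop :=
  (∀ k : ℕ, 5 ≤ k → ∀ f : ZMod k → V, ¬ IsInducedCycle G k f) ∧
  (∀ k : ℕ, 5 ≤ k → ∀ f : ZMod k → V, ¬ IsInducedCycle Gᶜ k f)

/-!
A vertex on an induced cycle of length at least 5 in `H` has two non-adjacent neighbours and
two adjacent non-neighbours on that cycle, so it is simplicial neither in `H` nor in `Hᶜ`.
A vertex of degree at least `n - 2` in `G` has at most one neighbour in `Gᶜ`, hence is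
simplicial in `Gᶜ`. So under either hypothesis `v` is simplicial in `G` or in `Gᶜ`, and since
`Gᶜᶜ = G` it lies on no long induced cycle of `G` or of `Gᶜ`: all of these already live in
`G - v`.
-/

open SimpleGraph

section

variable {V : Type*}

lemma ZMod.natCast_ne_zero_of_pos_of_lt_s3 {k c : ℕ} (hc : 0 < c) (hck : c < k) :
    (c : ZMod k) ≠ 0 :=
  (ZMod.natCast_eq_zero_iff c k).not.2 (Nat.not_dvd_of_pos_of_lt hc hck)

lemma SimpleGraph.induce_compl (G : SimpleGraph V) (s : Set V) :
    (G.induce s)ᶜ = Gᶜ.induce s := by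
  ext a b
  simp [Subtype.ext_iff]

lemma SimpleGraph.isClique_compl_neighborSet_of_card_sub_two_le [Fintype V]
    {G : SimpleGraph V} {v : V} (hv : Fintype.card V - 2 ≤ (G.neighborSet v).ncard) :
    Gᶜ.IsClique (Gᶜ.neighborSet v) := by
  refine IsClique.of_subsingleton (Set.ncard_le_one_iff_subsingleton.1 ?_)
  have hsplit := Set.ncard_union_eq (G.compl_neighborSet_disjoint v)
  rw [G.neighborSet_union_compl_neighborSet_eq v] at hsplit
  have hcard := Set.ncard_add_ncard_compl ({v} : Set V)
  rw [Set.ncard_singleton, Nat.card_eq_fintype_card] at hcard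
  omega

namespace IsInducedCycle

variable {H : SimpleGraph V} {k : ℕ} {f : ZMod k → V}

lemma not_isClique_neighborSet (hk : 4 ≤ k) (hf : IsInducedCycle H k f) (i : ZMod k) :
    ¬ H.IsClique (H.neighborSet (f i)) := by
  have h1 : (1 : ZMod k) ≠ 0 := by
    exact_mod_cast ZMod.natCast_ne_zero_of_pos_of_lt_s3 (c := 1) (by norm_num) (by omega)
  have h2 : (2 : ZMod k) ≠ 0 := by
    exact_mod_cast ZMod.natCast_ne_zero_of_pos_of_lt_s3 (c := 2) (by norm_num) (by omega)
  have h3 : (3 : ZMod k) ≠ 0 := by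
    exact_mod_cast ZMod.natCast_ne_zero_of_pos_of_lt_s3 (c := 3) (by norm_num) (by omega)
  intro hclique
  have hprev : H.Adj (f i) (f (i - 1)) := (hf.2 _ _).2 (Or.inr (by ring))
  have hnext : H.Adj (f i) (f (i + 1)) := (hf.2 _ _).2 (Or.inl rfl)
  have hdistinct : f (i - 1) ≠ f (i + 1) := fun h => h2 (by linear_combination -hf.1 h)
  rcases (hf.2 _ _).1 (hclique hprev hnext hdistinct) with h | h
  · exact h1 (by linear_combination h)
  · exact h3 (by linear_combination -h)

lemma not_isClique_compl_neighborSet (hk : 5 ≤ k) (hf : IsInducedCycle H k f) (i : ZMod k) :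
    ¬ Hᶜ.IsClique (Hᶜ.neighborSet (f i)) := by
  have h1 : (1 : ZMod k) ≠ 0 := by
    exact_mod_cast ZMod.natCast_ne_zero_of_pos_of_lt_s3 (c := 1) (by norm_num) (by omega)
  have h2 : (2 : ZMod k) ≠ 0 := by
    exact_mod_cast ZMod.natCast_ne_zero_of_pos_of_lt_s3 (c := 2) (by norm_num) (by omega)
  have h3 : (3 : ZMod k) ≠ 0 := by
    exact_mod_cast ZMod.natCast_ne_zero_of_pos_of_lt_s3 (c := 3) (by norm_num) (by omega)
  have h4 : (4 : ZMod k) ≠ 0 := by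
    exact_mod_cast ZMod.natCast_ne_zero_of_pos_of_lt_s3 (c := 4) (by norm_num) (by omega)
  intro hclique
  have hfar2 : Hᶜ.Adj (f i) (f (i + 2)) := by
    refine ⟨fun h => h2 (by linear_combination -hf.1 h), fun h => ?_⟩
    rcases (hf.2 _ _).1 h with h | h
    · exact h1 (by linear_combination h)
    · exact h3 (by linear_combination -h)
  have hfar3 : Hᶜ.Adj (f i) (f (i + 3)) := by
    refine ⟨fun h => h3 (by linear_combination -hf.1 h), fun h => ?_⟩
    rcases (hf.2 _ _).1 h with h | h
    · exact h2 (by linear_combination h)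
    · exact h4 (by linear_combination -h)
  have hdistinct : f (i + 2) ≠ f (i + 3) := fun h => h1 (by linear_combination -hf.1 h)
  exact (hclique hfar2 hfar3 hdistinct).2 ((hf.2 _ _).2 (Or.inl (by ring)))

lemma apply_ne_of_isClique (hk : 5 ≤ k) (hf : IsInducedCycle H k f) {v : V}
    (hv : H.IsClique (H.neighborSet v) ∨ Hᶜ.IsClique (Hᶜ.neighborSet v)) (i : ZMod k) :
    f i ≠ v := by
  rintro rfl
  rcases hv with hv | hv
  · exact hf.not_isClique_neighborSet (by omega) i hv
  · exact hf.not_isClique_compl_neighborSet hk i hv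

lemma induce_iff {G : SimpleGraph V} {s : Set V} {f : ZMod k → s} :
    IsInducedCycle (G.induce s) k f ↔ IsInducedCycle G k (Subtype.val ∘ f) := by
  simp only [IsInducedCycle, Subtype.val_injective.of_comp_iff, Function.comp_apply,
    induce_adj]

end IsInducedCycle

lemma WeaklyChordal.induce {G : SimpleGraph V} (hG : WeaklyChordal G) (s : Set V) :
    WeaklyChordal (G.induce s) := by
  refine ⟨fun k hk f hf => hG.1 k hk _ (IsInducedCycle.induce_iff.1 hf), fun k hk f hf => ?_⟩
  rw [induce_compl] at hf
  exact hG.2 k hk _ (IsInducedCycle.induce_iff.1 hf)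

lemma WeaklyChordal.of_induce {G : SimpleGraph V} {s : Set V} (hG : WeaklyChordal (G.induce s))
    (hs : ∀ k, 5 ≤ k → ∀ f : ZMod k → V,
      IsInducedCycle G k f ∨ IsInducedCycle Gᶜ k f → ∀ i, f i ∈ s) :
    WeaklyChordal G := by
  refine ⟨fun k hk f hf => ?_, fun k hk f hf => ?_⟩
  · exact hG.1 k hk (Set.codRestrict f s (hs k hk f (.inl hf))) (IsInducedCycle.induce_iff.2 hf)
  · refine hG.2 k hk (Set.codRestrict f s (hs k hk f (.inr hf))) ?_
    rw [induce_compl]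
    exact IsInducedCycle.induce_iff.2 hf

end

/-- If `v` is simplicial or adjacent to at least `n - 2` vertices, then `G` is weakly
chordal iff `G - v` is weakly chordal. -/
theorem weaklyChordal_iff_delete_vertex {V : Type*} [Fintype V] (G : SimpleGraph V) (v : V)
    (hv : G.IsClique (G.neighborSet v) ∨ Fintype.card V - 2 ≤ (G.neighborSet v).ncard) :
    WeaklyChordal G ↔ WeaklyChordal (G.induce ({v}ᶜ : Set V)) := by
  have hsimplicial : G.IsClique (G.neighborSet v) ∨ Gᶜ.IsClique (Gᶜ.neighborSet v) :=
    hv.imp_right isClique_compl_neighborSet_of_card_sub_two_le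
  have hsimplicial' : Gᶜ.IsClique (Gᶜ.neighborSet v) ∨ Gᶜᶜ.IsClique (Gᶜᶜ.neighborSet v) := by
    rw [compl_compl]
    exact hsimplicial.symm
  refine ⟨fun hG => hG.induce _, fun hG => hG.of_induce fun k hk f hf i => ?_⟩
  rcases hf with hf | hf
  · exact hf.apply_ne_of_isClique hk hsimplicial i
  · exact hf.apply_ne_of_isClique hk hsimplicial' i
end

section
/- Let G be a split graph with clique C and independent set I, and let \sigma = (v_1, ..., v_n) be an ordering of the vertices satisfying the MNS 3-point condition: whenever a \prec_\sigma b \prec_\sigma c with ac \in E and ab \notin E, there exists d \prec_\sigma b with db \in E and dc \notin E. Then for every pair v_i \in I and v_j \in C with j > i, every clique vertex among v_1, ..., v_{i-1} is a neighbor of v_i. -/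
/-!
If a clique vertex `σ k` before the independent vertex `σ i` were not adjacent to it, the
3-point condition applied to `σ k ≺ σ i ≺ σ j` (where `σ k ∼ σ j` inside the clique) would give
a neighbour `σ d` of `σ i` that is not adjacent to `σ j`. But every neighbour of an independent
vertex lies in the clique, hence is adjacent to `σ j`.
-/

namespace SimpleGraph

variable {V : Type*} {G : SimpleGraph V} {C I : Set V}

theorem adj_of_adj_mem_indep_of_mem_clique (hcover : ∀ x, x ∈ C ∨ x ∈ I)
    (hC : G.IsClique C) (hI : ∀ a ∈ I, ∀ b ∈ I, ¬ G.Adj a b) {v c d : V}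
    (hv : v ∈ I) (hc : c ∈ C) (hdv : G.Adj d v) (hdc : d ≠ c) : G.Adj d c := by
  have hd : d ∈ C := (hcover d).resolve_right fun hd => hI d hd v hv hdv
  exact hC hd hc hdc

end SimpleGraph

/-- Lemma 6(1): in an MNS ordering of a split graph, if an independent-set vertex
appears before some clique vertex, then all earlier clique vertices are its neighbors. -/
theorem mns_split_earlier_clique_neighbors {V : Type*} [Fintype V] (G : SimpleGraph V)
    (C I : Set V)
    (hpart : ∀ x : V, (x ∈ C ∨ x ∈ I) ∧ ¬ (x ∈ C ∧ x ∈ I))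
    (hC : G.IsClique C) (hI : ∀ a ∈ I, ∀ b ∈ I, ¬ G.Adj a b)
    (σ : Fin (Fintype.card V) ≃ V)
    (hmns : ∀ a b c : Fin (Fintype.card V), a < b → b < c →
      G.Adj (σ a) (σ c) → ¬ G.Adj (σ a) (σ b) →
      ∃ d, d < b ∧ G.Adj (σ d) (σ b) ∧ ¬ G.Adj (σ d) (σ c)) :
    ∀ i j : Fin (Fintype.card V), i < j → σ i ∈ I → σ j ∈ C →
      ∀ k, k < i → σ k ∈ C → G.Adj (σ k) (σ i) := by
  intro i j hij hiI hjC k hki hkC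
  by_contra hki_nadj
  have hkj : G.Adj (σ k) (σ j) := hC hkC hjC (σ.injective.ne (hki.trans hij).ne)
  obtain ⟨d, hdi, hdi_adj, hdj_nadj⟩ := hmns k i j hki hij hkj hki_nadj
  exact hdj_nadj <| G.adj_of_adj_mem_indep_of_mem_clique (fun x => (hpart x).1) hC hI hiI hjC
    hdi_adj (σ.injective.ne (hdi.trans hij).ne)
end

section
/- Let G be a split graph with clique C and independent set I, and let \sigma = (v_1, ..., v_n) be an ordering of V satisfying the MNS 3-point condition. Suppose some vertex v_i \in I appears before some vertex v_j \in C (i < j), and let l = |{v_1, ..., v_{i-1}} \cap C|. Then the vertices v_{i+1}, ..., v_{deg(v_i) - l + i} are all neighbors of v_i, i.e., all remaining neighbors of v_i are chosen consecutively directly after v_i. -/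
/-! An independent vertex `v` never has a non-neighbour strictly between itself and a later
neighbour: by the 3-point condition such a "gap" `a < b < c` produces a witness `d < b`, which
must lie in `I` because it misses the clique vertex `c`, and `(d, a, b)` or `(a, d, c)` is then a
gap with a smaller middle vertex. Hence the neighbours of `v_i` after it form an interval starting
at `v_{i+1}`; its neighbours before it are clique vertices, so the interval has at least
`deg(v_i) - l` elements. -/

namespace SimpleGraph

variable {V ι : Type*} {G : SimpleGraph V} {C I : Set V}

def IsMNSOrdering [LT ι] (G : SimpleGraph V) (σ : ι → V) : Prop :=
  ∀ a b c : ι, a < b → b < c → G.Adj (σ a) (σ c) → ¬ G.Adj (σ a) (σ b) →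
    ∃ d, d < b ∧ G.Adj (σ d) (σ b) ∧ ¬ G.Adj (σ d) (σ c)

lemma mem_of_adj_of_mem_indep (hcover : ∀ x, x ∈ C ∨ x ∈ I)
    (hI : ∀ a ∈ I, ∀ b ∈ I, ¬ G.Adj a b) {a c : V} (ha : a ∈ I) (hac : G.Adj a c) : c ∈ C :=
  (hcover c).resolve_right fun hc => hI a ha c hc hac

lemma IsMNSOrdering.adj_of_lt_of_adj [LinearOrder ι] [WellFoundedLT ι] {σ : ι → V}
    (hmns : G.IsMNSOrdering σ) (hσ : Function.Injective σ) (hcover : ∀ x, x ∈ C ∨ x ∈ I)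
    (hC : G.IsClique C) (hI : ∀ a ∈ I, ∀ b ∈ I, ¬ G.Adj a b) {a b c : ι} (hab : a < b)
    (hbc : b < c) (ha : σ a ∈ I) (hac : G.Adj (σ a) (σ c)) : G.Adj (σ a) (σ b) := by
  induction b using WellFoundedLT.induction generalizing a c with
  | _ b ih =>
  by_contra hab'
  obtain ⟨d, hdb, hdb', hdc⟩ := hmns a b c hab hbc hac hab'
  have hcC : σ c ∈ C := mem_of_adj_of_mem_indep hcover hI ha hac
  have hdI : σ d ∈ I := (hcover (σ d)).resolve_left fun hdC =>
    hdc (hC hdC hcC (hσ.ne (hdb.trans hbc).ne))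
  rcases lt_trichotomy d a with hda | rfl | had
  · exact hI _ hdI _ ha (ih a hab hda hab hdI hdb')
  · exact hab' hdb'
  · exact hI _ ha _ hdI (ih d hdb had (hdb.trans hbc) ha hac)

lemma neighborSet_subset_image {n : ℕ} (σ : Fin n ≃ V) (hcover : ∀ x, x ∈ C ∨ x ∈ I)
    (hI : ∀ a ∈ I, ∀ b ∈ I, ¬ G.Adj a b) {i m : Fin n} (hi : σ i ∈ I)
    (hafter : ∀ k, m ≤ k → ¬ G.Adj (σ i) (σ k)) :
    G.neighborSet (σ i) ⊆ σ '' ({k | k < i ∧ σ k ∈ C} ∪ Finset.Ioo i m) := by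
  intro v hv
  obtain ⟨k, rfl⟩ := σ.surjective v
  have hk : G.Adj (σ i) (σ k) := hv
  refine ⟨k, ?_, rfl⟩
  rcases lt_trichotomy k i with hki | rfl | hik
  · exact Or.inl ⟨hki, mem_of_adj_of_mem_indep hcover hI hi hk⟩
  · exact absurd hk (G.irrefl)
  · exact Or.inr (Finset.mem_Ioo.2 ⟨hik, lt_of_not_ge fun hmk => hafter k hmk hk⟩)

lemma ncard_neighborSet_le {n : ℕ} (σ : Fin n ≃ V) (hcover : ∀ x, x ∈ C ∨ x ∈ I)
    (hI : ∀ a ∈ I, ∀ b ∈ I, ¬ G.Adj a b) {i m : Fin n} (hi : σ i ∈ I)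
    (hafter : ∀ k, m ≤ k → ¬ G.Adj (σ i) (σ k)) :
    (G.neighborSet (σ i)).ncard ≤ {k | k < i ∧ σ k ∈ C}.ncard + ((m : ℕ) - i - 1) :=
  calc (G.neighborSet (σ i)).ncard
      ≤ (σ '' ({k | k < i ∧ σ k ∈ C} ∪ Finset.Ioo i m)).ncard :=
        Set.ncard_le_ncard (neighborSet_subset_image σ hcover hI hi hafter) (Set.toFinite _)
    _ ≤ ({k | k < i ∧ σ k ∈ C} ∪ Finset.Ioo i m : Set (Fin n)).ncard := Set.ncard_image_le
    _ ≤ {k | k < i ∧ σ k ∈ C}.ncard + (Finset.Ioo i m : Set (Fin n)).ncard :=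
        Set.ncard_union_le _ _
    _ = {k | k < i ∧ σ k ∈ C}.ncard + ((m : ℕ) - i - 1) := by
        rw [Set.ncard_coe_finset, Fin.card_Ioo]

end SimpleGraph

/-- Lemma 6(2): in an MNS ordering of a split graph, if an independent-set vertex `v_i`
appears before some clique vertex, then the `deg(v_i) - l` vertices following `v_i`
(where `l` is the number of clique vertices before `v_i`) are all neighbors of `v_i`. -/
theorem mns_split_remaining_neighbors_consecutive {V : Type*} [Fintype V]
    (G : SimpleGraph V) (C I : Set V)
    (hpart : ∀ x : V, (x ∈ C ∨ x ∈ I) ∧ ¬ (x ∈ C ∧ x ∈ I))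
    (hC : G.IsClique C) (hI : ∀ a ∈ I, ∀ b ∈ I, ¬ G.Adj a b)
    (σ : Fin (Fintype.card V) ≃ V)
    (hmns : ∀ a b c : Fin (Fintype.card V), a < b → b < c →
      G.Adj (σ a) (σ c) → ¬ G.Adj (σ a) (σ b) →
      ∃ d, d < b ∧ G.Adj (σ d) (σ b) ∧ ¬ G.Adj (σ d) (σ c)) :
    ∀ i j : Fin (Fintype.card V), i < j → σ i ∈ I → σ j ∈ C →
      ∀ m : Fin (Fintype.card V), i < m →
        (m : ℕ) ≤ (i : ℕ) + ((G.neighborSet (σ i)).ncard -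
          ({k : Fin (Fintype.card V) | k < i ∧ σ k ∈ C}).ncard) →
        G.Adj (σ i) (σ m) := by
  intro i _ _ hi _ m him hm
  have hcover : ∀ x, x ∈ C ∨ x ∈ I := fun x => (hpart x).1
  by_contra him'
  have hafter : ∀ k, m ≤ k → ¬ G.Adj (σ i) (σ k) := by
    intro k hmk hik
    rcases hmk.eq_or_lt with rfl | hmk
    · exact him' hik
    · exact him' ((show G.IsMNSOrdering σ from hmns).adj_of_lt_of_adj σ.injective hcover hC hI
        him hmk hi hik)
  have hcount := SimpleGraph.ncard_neighborSet_le σ hcover hI hi hafter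
  have : (i : ℕ) < m := him
  omega
end

section
/- Let G be a graph with a two-pair {x, y} (two non-adjacent vertices such that every induced path between them has exactly two edges). Then G is weakly chordal if and only if the graph G + xy obtained by adding the edge xy is weakly chordal. -/
/-- A walk is an induced path if it is a path and any adjacency of `G` between its
vertices is an edge of the walk itself. -/
def IsInducedPath {V : Type*} {G : SimpleGraph V} {x y : V} (p : G.Walk x y) : Prop :=
  p.IsPath ∧ ∀ u v : V, u ∈ p.support → v ∈ p.support → G.Adj u v → p.toSubgraph.Adj u v

/-- `x, y` form a two-pair in `G`: they are distinct, non-adjacent, and every induced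
path between them has exactly two edges. -/
def IsTwoPair {V : Type*} (G : SimpleGraph V) (x y : V) : Prop :=
  x ≠ y ∧ ¬ G.Adj x y ∧ ∀ p : G.Walk x y, IsInducedPath p → p.length = 2

section Aux
variable {V : Type*} {G : SimpleGraph V} {x y : V}

lemma exists_walk_of_fun (G : SimpleGraph V) :
    ∀ (n : ℕ) (g : ℕ → V), (∀ i < n, G.Adj (g i) (g (i+1))) →
    ∃ p : G.Walk (g 0) (g n), p.length = n ∧
      p.support = (List.range (n+1)).map g ∧
      p.edges = (List.range n).map (fun i => s(g i, g (i+1))) := by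
  intro n
  induction n with
  | zero => intro g _; exact ⟨.nil, rfl, by simp [List.range_succ], by simp⟩
  | succ n ih =>
    intro g hadj
    obtain ⟨p, hl, hs, he⟩ := ih (fun i => g (i+1)) (fun i hi => hadj (i+1) (by omega))
    refine ⟨.cons (hadj 0 (by omega)) p, by simp [hl], ?_, ?_⟩
    · rw [SimpleGraph.Walk.support_cons, hs]
      simp [List.range_succ_eq_map, List.map_map, Function.comp_def]
    · rw [SimpleGraph.Walk.edges_cons, he]
      simp [List.range_succ_eq_map, List.map_map, Function.comp_def]

lemma exists_inducedPath_of_fun (G : SimpleGraph V) (n : ℕ) (g : ℕ → V)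
    (hinj : ∀ i ≤ n, ∀ j ≤ n, g i = g j → i = j)
    (hadj : ∀ i < n, G.Adj (g i) (g (i+1)))
    (hnadj : ∀ i j, i ≤ n → j ≤ n → i + 1 < j → ¬ G.Adj (g i) (g j)) :
    ∃ p : G.Walk (g 0) (g n), IsInducedPath p ∧ p.length = n := by
  obtain ⟨p, hl, hs, he⟩ := exists_walk_of_fun G n g hadj
  refine ⟨p, ⟨?_, ?_⟩, hl⟩
  · rw [SimpleGraph.Walk.isPath_def, hs]
    refine List.Nodup.map_on ?_ List.nodup_range
    intro i hi j hj hgij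
    exact hinj i (by simpa [Nat.lt_succ_iff] using hi) j
      (by simpa [Nat.lt_succ_iff] using hj) hgij
  · intro u v hu hv huv
    rw [hs, List.mem_map] at hu hv
    obtain ⟨i, hi, rfl⟩ := hu
    obtain ⟨j, hj, rfl⟩ := hv
    rw [List.mem_range] at hi hj
    replace hi : i ≤ n := by omega
    replace hj : j ≤ n := by omega
    have hne : i ≠ j := by rintro rfl; exact G.irrefl huv
    have key : j = i + 1 ∨ i = j + 1 := by
      by_contra hc
      push_neg at hc
      rcases Nat.lt_or_ge i j with h1 | h1
      · exact hnadj i j hi hj (by omega) huv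
      · exact hnadj j i hj hi (by omega) huv.symm
    rw [← SimpleGraph.Subgraph.mem_edgeSet, SimpleGraph.Walk.mem_edges_toSubgraph, he]
    rcases key with rfl | rfl
    · exact List.mem_map.mpr ⟨i, List.mem_range.mpr (by omega), rfl⟩
    · rw [Sym2.eq_swap]
      exact List.mem_map.mpr ⟨j, List.mem_range.mpr (by omega), rfl⟩

lemma IsInducedPath.reverse {p : G.Walk x y} (hp : IsInducedPath p) :
    IsInducedPath p.reverse := by
  refine ⟨hp.1.reverse, ?_⟩
  intro u v hu hv huv
  rw [SimpleGraph.Walk.support_reverse, List.mem_reverse] at hu hv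
  rw [SimpleGraph.Walk.toSubgraph_reverse]
  exact hp.2 u v hu hv huv

lemma IsInducedPath.copy {u v u' v' : V} {p : G.Walk u v} (hp : IsInducedPath p)
    (hu : u = u') (hv : v = v') : IsInducedPath (p.copy hu hv) := by
  subst hu; subst hv; exact hp

lemma IsTwoPair.no_fun (h : IsTwoPair G x y) (n : ℕ) (hn : n ≠ 2) (g : ℕ → V)
    (hend : (g 0 = x ∧ g n = y) ∨ (g 0 = y ∧ g n = x))
    (hinj : ∀ i ≤ n, ∀ j ≤ n, g i = g j → i = j)
    (hadj : ∀ i < n, G.Adj (g i) (g (i+1)))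
    (hnadj : ∀ i j, i ≤ n → j ≤ n → i + 1 < j → ¬ G.Adj (g i) (g j)) : False := by
  obtain ⟨p, hp, hl⟩ := exists_inducedPath_of_fun G n g hinj hadj hnadj
  rcases hend with ⟨h0, h1⟩ | ⟨h0, h1⟩
  · have := h.2.2 (p.copy h0 h1) (hp.copy h0 h1)
    rw [SimpleGraph.Walk.length_copy, hl] at this
    exact hn this
  · have := h.2.2 ((p.copy h0 h1).reverse) ((hp.copy h0 h1).reverse)
    rw [SimpleGraph.Walk.length_reverse, SimpleGraph.Walk.length_copy, hl] at this
    exact hn this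

end Aux

section CycAux
variable {V : Type*} {H : SimpleGraph V} {k : ℕ} {f : ZMod k → V}
lemma cast_inj_of_lt {k i j : ℕ} (hi : i < k) (hj : j < k) (hc : (i : ZMod k) = j) : i = j := by
  have := congrArg ZMod.val hc
  rwa [ZMod.val_natCast_of_lt hi, ZMod.val_natCast_of_lt hj] at this

lemma cast_consec_iff {k : ℕ} {i j : ℕ} (hi : i < k) (hj : j < k) :
    ((j : ZMod k) = (i : ZMod k) + 1) ↔ (j = i + 1 ∨ (i + 1 = k ∧ j = 0)) := by
  rw [show ((i:ZMod k) + 1) = ((i+1 : ℕ) : ZMod k) by push_cast; ring]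
  constructor
  · intro hc
    have hv := congrArg ZMod.val hc
    rw [ZMod.val_natCast_of_lt hj, ZMod.val_natCast] at hv
    rcases Nat.lt_or_ge (i+1) k with h1 | h1
    · rw [Nat.mod_eq_of_lt h1] at hv; omega
    · have h2 : i + 1 = k := by omega
      rw [h2, Nat.mod_self] at hv; omega
  · rintro (rfl | ⟨h1, rfl⟩)
    · rfl
    · rw [h1, ZMod.natCast_self, Nat.cast_zero]

lemma IsInducedCycle.shift (hf : IsInducedCycle H k f) (c : ZMod k) :
    IsInducedCycle H k (fun i => f (c + i)) := by
  refine ⟨fun i j hij => by have := hf.1 hij; exact add_left_cancel this, fun i j => ?_⟩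
  rw [hf.2]
  constructor <;> rintro (h | h)
  · left; linear_combination h
  · right; linear_combination h
  · left; linear_combination h
  · right; linear_combination h

lemma IsInducedCycle.reflect (hf : IsInducedCycle H k f) :
    IsInducedCycle H k (fun i => f (- i)) := by
  refine ⟨fun i j hij => by have := hf.1 hij; exact neg_injective this, fun i j => ?_⟩
  rw [hf.2]
  constructor <;> rintro (h | h)
  · right; linear_combination h
  · left; linear_combination h
  · right; linear_combination h
  · left; linear_combination h

/-- adjacency along an induced cycle, in terms of natural number indices -/
lemma IsInducedCycle.adj_nat (hf : IsInducedCycle H k f) {a b : ℕ} (ha : a < k) (hb : b < k) :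
    H.Adj (f a) (f b) ↔
      (b = a + 1 ∨ (a + 1 = k ∧ b = 0) ∨ a = b + 1 ∨ (b + 1 = k ∧ a = 0)) := by
  rw [hf.2, cast_consec_iff ha hb, cast_consec_iff hb ha]
  tauto

lemma IsInducedCycle.cast_inj (hf : IsInducedCycle H k f) {a b : ℕ} (ha : a < k) (hb : b < k) :
    f a = f b ↔ a = b := by
  constructor
  · intro hab; exact cast_inj_of_lt ha hb (hf.1 hab)
  · rintro rfl; rfl
end CycAux

section Main
variable {V : Type*} {G : SimpleGraph V} {x y : V}

lemma sup_edge_adj (hxy : x ≠ y) (u v : V) :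
    (G ⊔ SimpleGraph.fromEdgeSet {s(x, y)}).Adj u v ↔
      G.Adj u v ∨ (u = x ∧ v = y) ∨ (u = y ∧ v = x) := by
  simp only [SimpleGraph.sup_adj, SimpleGraph.fromEdgeSet_adj, Set.mem_singleton_iff, Sym2.eq_iff]
  constructor
  · rintro (hh | ⟨(⟨rfl, rfl⟩ | ⟨rfl, rfl⟩), hne⟩) <;> tauto
  · rintro (hh | ⟨rfl, rfl⟩ | ⟨rfl, rfl⟩)
    · exact Or.inl hh
    · exact Or.inr ⟨Or.inl ⟨rfl, rfl⟩, hxy⟩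
    · exact Or.inr ⟨Or.inr ⟨rfl, rfl⟩, hxy.symm⟩

lemma IsTwoPair.cycle_segment (h : IsTwoPair G x y) {k : ℕ} (hk : 5 ≤ k) {f : ZMod k → V}
    (hf : IsInducedCycle G k f) {n : ℕ} (hn : n ≤ k - 2)
    (hend : (f 0 = x ∧ f (n : ℕ) = y) ∨ (f 0 = y ∧ f (n : ℕ) = x)) : n = 2 := by
  by_contra hne2
  refine h.no_fun n hne2 (fun m => f m) ?_ ?_ ?_ ?_
  · simpa using hend
  · intro i hi j hj hg
    exact (hf.cast_inj (by omega) (by omega)).mp hg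
  · intro i hi
    rw [hf.adj_nat (by omega) (by omega)]
    omega
  · intro i j hi hj hij
    rw [hf.adj_nat (by omega) (by omega)]
    omega

lemma H1 (h : IsTwoPair G x y) {k : ℕ} (hk : 5 ≤ k) {f : ZMod k → V}
    (hf : IsInducedCycle G k f) {a b : ZMod k} (ha : f a = x) (hb : f b = y) : False := by
  haveI : NeZero k := ⟨by omega⟩
  obtain ⟨hne, hnadj, -⟩ := id h
  have hA : IsInducedCycle G k (fun i => f (a + i)) := hf.shift a
  have hA0 : f (a + 0) = x := by simpa using ha
  set d : ZMod k := b - a with hd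
  have hAd : f (a + d) = y := by rw [show a + d = b by rw [hd]; ring]; exact hb
  set j : ℕ := d.val with hj
  have hjk : j < k := ZMod.val_lt d
  have hdj : (j : ZMod k) = d := ZMod.natCast_zmod_val d
  have hj0 : j ≠ 0 := by
    intro h0
    apply hne
    rw [← hA0, ← hAd, ← hdj, h0, Nat.cast_zero]
  have hj1 : j ≠ 1 := by
    intro h1
    apply hnadj
    rw [← hA0, ← hAd, ← hdj, h1, Nat.cast_one]
    exact (hA.2 0 1).mpr (Or.inl (by ring))
  have hjk1 : j ≠ k - 1 := by
    intro h1
    apply hnadj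
    have hdm : d = -1 := by
      rw [← hdj, h1, Nat.cast_sub (by omega), ZMod.natCast_self, Nat.cast_one]
      ring
    rw [← hA0, ← hAd]
    exact ((hA.2 d 0).mpr (Or.inl (by rw [hdm]; ring))).symm
  have e1 : j = 2 := by
    refine h.cycle_segment hk hA (by omega) (Or.inl ⟨hA0, ?_⟩)
    show f (a + (j : ZMod k)) = y
    rw [hdj]; exact hAd
  have hB : IsInducedCycle G k (fun i => f (b + i)) := hf.shift b
  have hB0 : f (b + 0) = y := by simpa using hb
  have hBn : f (b + ((k - j : ℕ) : ZMod k)) = x := by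
    have hcast : ((k - j : ℕ) : ZMod k) = -d := by
      rw [Nat.cast_sub hjk.le, ZMod.natCast_self, hdj]; ring
    rw [hcast, show b + -d = a by rw [hd]; ring]; exact ha
  have e2 : k - j = 2 := h.cycle_segment hk hB (by omega) (Or.inr ⟨hB0, hBn⟩)
  omega

lemma compl_cycle_G_adj {k : ℕ} {f : ZMod k → V} (hf : IsInducedCycle Gᶜ k f)
    {i j : ℕ} (hi : i < k) (hj : j < k) :
    G.Adj (f i) (f j) ↔ (i ≠ j ∧
      ¬(j = i + 1 ∨ (i + 1 = k ∧ j = 0) ∨ i = j + 1 ∨ (j + 1 = k ∧ i = 0))) := by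
  have h1 : G.Adj (f i) (f j) ↔ ((f i : V) ≠ f j ∧ ¬ Gᶜ.Adj (f i) (f j)) := by
    constructor
    · intro hg; exact ⟨hg.ne, fun hc => hc.2 hg⟩
    · rintro ⟨hne', hnc⟩
      by_contra hg
      exact hnc ⟨hne', hg⟩
  rw [h1, hf.adj_nat hi hj]
  simp only [ne_eq, hf.cast_inj hi hj]

lemma H2aux (h : IsTwoPair G x y) {k : ℕ} (hk : 5 ≤ k) {f : ZMod k → V}
    (hf : IsInducedCycle Gᶜ k f)
    (hend : (f 0 = x ∧ f 1 = y) ∨ (f 0 = y ∧ f 1 = x)) : False := by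
  set idx : ℕ → ℕ := fun m => if m = 0 then 0 else if m = 1 then 2 else if m = 2 then k - 1 else 1
    with hidx
  have hlt : ∀ m : ℕ, idx m < k := by
    intro m; simp only [hidx]; split_ifs <;> omega
  refine h.no_fun 3 (by omega) (fun m => f (idx m)) ?_ ?_ ?_ ?_
  · rcases hend with ⟨h1, h2⟩ | ⟨h1, h2⟩
    · exact Or.inl ⟨by simpa [hidx] using h1, by simpa [hidx] using h2⟩
    · exact Or.inr ⟨by simpa [hidx] using h1, by simpa [hidx] using h2⟩
  · intro i hi j hj hg
    have := (hf.cast_inj (hlt i) (hlt j)).mp hg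
    simp only [hidx] at this
    split_ifs at this <;>
      first
        | exact ‹False›.elim
        | omega
        | (simp only [false_and, and_false, or_false, false_or, and_true, true_and, not_false_eq_true] at this; first | trivial | omega)
  · intro i hi
    rw [compl_cycle_G_adj hf (hlt i) (hlt (i+1))]
    simp only [hidx]
    split_ifs <;>
      first
        | exact ‹False›.elim
        | omega
        | (simp only [false_and, and_false, or_false, false_or, and_true, true_and,
               not_false_eq_true]; first | trivial | omega)
  · intro i j hi hj hij
    rw [compl_cycle_G_adj hf (hlt i) (hlt j)]
    simp only [hidx]
    split_ifs <;>
      first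
        | exact ‹False›.elim
        | omega
        | (simp only [false_and, and_false, or_false, false_or, and_true, true_and,
               not_false_eq_true]; first | trivial | omega)

lemma H2 (h : IsTwoPair G x y) {k : ℕ} (hk : 5 ≤ k) {f : ZMod k → V}
    (hf : IsInducedCycle Gᶜ k f) {a b : ZMod k} (ha : f a = x) (hb : f b = y) : False := by
  obtain ⟨hne, hnadj, -⟩ := id h
  have hadjc : Gᶜ.Adj (f a) (f b) := by
    rw [ha, hb, SimpleGraph.compl_adj]
    exact ⟨hne, hnadj⟩
  rcases (hf.2 a b).mp hadjc with rfl | rfl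
  · refine H2aux h hk (hf.shift a) (Or.inl ⟨?_, ?_⟩)
    · simpa using ha
    · simpa using hb
  · refine H2aux h hk (hf.shift b) (Or.inr ⟨?_, ?_⟩)
    · simpa using hb
    · simpa using ha

lemma cast_eq_zero_of_lt {k : ℕ} {i : ℕ} (hk : 0 < k) (hi : i < k) (e : (i : ZMod k) = 0) :
    i = 0 :=
  cast_inj_of_lt hi hk (by rw [e, Nat.cast_zero])

lemma cast_eq_neg_one_of_lt {k : ℕ} (hk : 0 < k) {i : ℕ} (hi : i < k) (e : (i : ZMod k) = -1) :
    i = k - 1 := by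
  apply cast_inj_of_lt hi (by omega)
  rw [e, Nat.cast_sub (by omega), Nat.cast_one, ZMod.natCast_self]
  ring

lemma H3 (h : IsTwoPair G x y) {k : ℕ} (hk : 5 ≤ k) {f : ZMod k → V}
    (hf : IsInducedCycle (G ⊔ SimpleGraph.fromEdgeSet {s(x, y)}) k f) {a : ZMod k}
    (hp : (f a = x ∧ f (a+1) = y) ∨ (f a = y ∧ f (a+1) = x)) : False := by
  obtain ⟨hne, hnadj, -⟩ := id h
  have hB : IsInducedCycle (G ⊔ SimpleGraph.fromEdgeSet {s(x, y)}) k (fun i => f (a + 1 + i)) :=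
    hf.shift (a+1)
  have hB0 : f (a + 1 + ((0:ℕ) : ZMod k)) = f (a+1) := by norm_num
  have hBk : f (a + 1 + ((k-1:ℕ) : ZMod k)) = f a := by
    have hc : ((k-1:ℕ) : ZMod k) = -1 := by
      rw [Nat.cast_sub (by omega), Nat.cast_one, ZMod.natCast_self]; ring
    rw [hc, show a + 1 + (-1 : ZMod k) = a from by ring]
  refine h.no_fun (k-1) (by omega) (fun m => f (a + 1 + (m : ZMod k))) ?_ ?_ ?_ ?_
  · rcases hp with ⟨h1, h2⟩ | ⟨h1, h2⟩
    · exact Or.inr ⟨hB0.trans h2, hBk.trans h1⟩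
    · exact Or.inl ⟨hB0.trans h2, hBk.trans h1⟩
  · intro i hi j hj hg
    exact (hB.cast_inj (by omega) (by omega)).mp hg
  · intro i hi
    have hadj' := (hB.adj_nat (a := i) (b := i+1) (by omega) (by omega)).mpr (by omega)
    rcases (sup_edge_adj hne _ _).mp hadj' with hg | ⟨h1, h2⟩ | ⟨h1, h2⟩
    · exact hg
    · exfalso
      rcases hp with ⟨p1, p2⟩ | ⟨p1, p2⟩
      · have e1 : a + 1 + (i : ZMod k) = a := hf.1 (h1.trans p1.symm)
        have e1' : (i : ZMod k) = -1 := by linear_combination e1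
        have := cast_eq_neg_one_of_lt (k := k) (by omega) (by omega) e1'
        omega
      · have e1 : a + 1 + (i : ZMod k) = a + 1 := hf.1 (h1.trans p2.symm)
        have e2 : a + 1 + ((i+1 : ℕ) : ZMod k) = a := hf.1 (h2.trans p1.symm)
        have e1' : (i : ZMod k) = 0 := by linear_combination e1
        have e2' : ((i+1 : ℕ) : ZMod k) = -1 := by linear_combination e2
        have := cast_eq_zero_of_lt (by omega) (by omega) e1'
        have := cast_eq_neg_one_of_lt (k := k) (by omega) (by omega) e2'
        omega
    · exfalso
      rcases hp with ⟨p1, p2⟩ | ⟨p1, p2⟩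
      · have e1 : a + 1 + (i : ZMod k) = a + 1 := hf.1 (h1.trans p2.symm)
        have e2 : a + 1 + ((i+1 : ℕ) : ZMod k) = a := hf.1 (h2.trans p1.symm)
        have e1' : (i : ZMod k) = 0 := by linear_combination e1
        have e2' : ((i+1 : ℕ) : ZMod k) = -1 := by linear_combination e2
        have := cast_eq_zero_of_lt (by omega) (by omega) e1'
        have := cast_eq_neg_one_of_lt (k := k) (by omega) (by omega) e2'
        omega
      · have e1 : a + 1 + (i : ZMod k) = a := hf.1 (h1.trans p1.symm)
        have e1' : (i : ZMod k) = -1 := by linear_combination e1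
        have := cast_eq_neg_one_of_lt (k := k) (by omega) (by omega) e1'
        omega
  · intro i j hi hj hij
    by_cases hcase : i = 0 ∧ j = k - 1
    · obtain ⟨rfl, rfl⟩ := hcase
      show ¬ G.Adj (f (a + 1 + ((0:ℕ) : ZMod k))) (f (a + 1 + ((k-1:ℕ) : ZMod k)))
      rw [hB0, hBk]
      rcases hp with ⟨p1, p2⟩ | ⟨p1, p2⟩
      · rw [p1, p2]; exact fun hg => hnadj hg.symm
      · rw [p1, p2]; exact hnadj
    · intro hg
      have hg' := (sup_edge_adj hne (f (a + 1 + (i : ZMod k))) (f (a + 1 + (j : ZMod k)))).mpr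
        (Or.inl hg)
      have := (hB.adj_nat (a := i) (b := j) (by omega) (by omega)).mp hg'
      omega

lemma H4_G_adj (h : IsTwoPair G x y) {k : ℕ} (hk : 5 ≤ k) {f : ZMod k → V}
    (hf : IsInducedCycle (G ⊔ SimpleGraph.fromEdgeSet {s(x, y)})ᶜ k f)
    (hx : f 0 = x) {jy : ℕ} (hjy : jy < k) (hy : f jy = y)
    {i j : ℕ} (hi : i < k) (hj : j < k) :
    G.Adj (f i) (f j) ↔ (i ≠ j ∧
      ¬(j = i + 1 ∨ (i + 1 = k ∧ j = 0) ∨ i = j + 1 ∨ (j + 1 = k ∧ i = 0)) ∧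
      ¬((i = 0 ∧ j = jy) ∨ (i = jy ∧ j = 0))) := by
  obtain ⟨hne, hnadj, -⟩ := id h
  have hx' : f ((0:ℕ) : ZMod k) = x := by simpa using hx
  constructor
  · intro hg
    have hg' : (G ⊔ SimpleGraph.fromEdgeSet {s(x, y)}).Adj (f i) (f j) :=
      (sup_edge_adj hne _ _).mpr (Or.inl hg)
    have hcc : ¬ (G ⊔ SimpleGraph.fromEdgeSet {s(x, y)})ᶜ.Adj (f i) (f j) := fun hc => hc.2 hg'
    rw [hf.adj_nat hi hj] at hcc
    refine ⟨?_, hcc, ?_⟩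
    · intro e
      exact G.irrefl (by rwa [(hf.cast_inj hi hj).mpr e] at hg)
    · rintro (⟨rfl, rfl⟩ | ⟨rfl, rfl⟩)
      · rw [hx', hy] at hg
        exact hnadj hg
      · rw [hy, hx'] at hg
        exact hnadj hg.symm
  · rintro ⟨hne', hncons, hnpair⟩
    have hfij : f i ≠ f j := fun e => hne' ((hf.cast_inj hi hj).mp e)
    have hnc : ¬ (G ⊔ SimpleGraph.fromEdgeSet {s(x, y)})ᶜ.Adj (f i) (f j) := by
      rw [hf.adj_nat hi hj]; exact hncons
    have hg' : (G ⊔ SimpleGraph.fromEdgeSet {s(x, y)}).Adj (f i) (f j) := by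
      by_contra hng
      exact hnc ⟨hfij, hng⟩
    rcases (sup_edge_adj hne _ _).mp hg' with hg | ⟨h1, h2⟩ | ⟨h1, h2⟩
    · exact hg
    · exact absurd (Or.inl ⟨(hf.cast_inj hi (by omega)).mp (h1.trans hx'.symm),
        (hf.cast_inj hj hjy).mp (h2.trans hy.symm)⟩) hnpair
    · exact absurd (Or.inr ⟨(hf.cast_inj hi hjy).mp (h1.trans hy.symm),
        (hf.cast_inj hj (by omega)).mp (h2.trans hx'.symm)⟩) hnpair

set_option maxHeartbeats 1000000 in
lemma H4core (h : IsTwoPair G x y) {k : ℕ} (hk : 5 ≤ k) {f : ZMod k → V}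
    (hf : IsInducedCycle (G ⊔ SimpleGraph.fromEdgeSet {s(x, y)})ᶜ k f)
    (hx : f 0 = x) {jy : ℕ} (hy : f jy = y) (hj2 : 2 ≤ jy)
    (hjk : jy = 2 ∨ jy ≤ k - 3) : False := by
  have hjyk : jy < k := by omega
  by_cases hk5 : k = 5
  · -- k = 5, jy = 2, path [0, 3, 1, 4, 2]
    subst hk5
    have hjy2 : jy = 2 := by omega
    subst hjy2
    set idx : ℕ → ℕ := fun m =>
      if m = 0 then 0 else if m = 1 then 3 else if m = 2 then 1 else if m = 3 then 4 else 2
      with hidx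
    have hlt : ∀ m : ℕ, idx m < 5 := by
      intro m; simp only [hidx]; split_ifs <;> omega
    refine h.no_fun 4 (by omega) (fun m => f (idx m)) ?_ ?_ ?_ ?_
    · exact Or.inl ⟨by simpa [hidx] using hx, by simpa [hidx] using hy⟩
    · intro i hi j hj hg
      have := (hf.cast_inj (hlt i) (hlt j)).mp hg
      simp only [hidx] at this
      split_ifs at this <;>
        first
          | exact ‹False›.elim
          | omega
          | (simp only [false_and, and_false, or_false, false_or, and_true, true_and,
               not_false_eq_true] at this; first | trivial | omega)
    · intro i hi
      rw [H4_G_adj h (by omega) hf hx hjyk hy (hlt i) (hlt (i+1))]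
      simp only [hidx]
      split_ifs <;>
        first
          | exact ‹False›.elim
          | omega
          | (simp only [false_and, and_false, or_false, false_or, and_true, true_and,
               not_false_eq_true]; first | trivial | omega)
    · intro i j hi hj hij
      rw [H4_G_adj h (by omega) hf hx hjyk hy (hlt i) (hlt j)]
      simp only [hidx]
      split_ifs <;>
        first
          | exact ‹False›.elim
          | omega
          | (simp only [false_and, and_false, or_false, false_or, and_true, true_and,
               not_false_eq_true]; first | trivial | omega)
  · have hk6 : 6 ≤ k := by omega
    by_cases hjy2 : jy = 2
    · -- path [0, 3, k-1, 2]
      subst hjy2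
      set idx : ℕ → ℕ := fun m =>
        if m = 0 then 0 else if m = 1 then 3 else if m = 2 then k - 1 else 2 with hidx
      have hlt : ∀ m : ℕ, idx m < k := by
        intro m; simp only [hidx]; split_ifs <;> omega
      refine h.no_fun 3 (by omega) (fun m => f (idx m)) ?_ ?_ ?_ ?_
      · exact Or.inl ⟨by simpa [hidx] using hx, by simpa [hidx] using hy⟩
      · intro i hi j hj hg
        have := (hf.cast_inj (hlt i) (hlt j)).mp hg
        simp only [hidx] at this
        split_ifs at this <;>
          first
            | exact ‹False›.elim
            | omega
            | (simp only [false_and, and_false, or_false, false_or, and_true, true_and,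
                 not_false_eq_true] at this; first | trivial | omega)
      · intro i hi
        rw [H4_G_adj h hk hf hx hjyk hy (hlt i) (hlt (i+1))]
        simp only [hidx]
        split_ifs <;>
          first
            | exact ‹False›.elim
            | omega
            | (simp only [false_and, and_false, or_false, false_or, and_true, true_and,
               not_false_eq_true]; first | trivial | omega)
      · intro i j hi hj hij
        rw [H4_G_adj h hk hf hx hjyk hy (hlt i) (hlt j)]
        simp only [hidx]
        split_ifs <;>
          first
            | exact ‹False›.elim
            | omega
            | (simp only [false_and, and_false, or_false, false_or, and_true, true_and,
               not_false_eq_true]; first | trivial | omega)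
    · -- 3 ≤ jy ≤ k - 3, path [0, jy+1, 1, jy]
      have hj3 : 3 ≤ jy := by omega
      have hjk3 : jy ≤ k - 3 := by omega
      set idx : ℕ → ℕ := fun m =>
        if m = 0 then 0 else if m = 1 then jy + 1 else if m = 2 then 1 else jy with hidx
      have hlt : ∀ m : ℕ, idx m < k := by
        intro m; simp only [hidx]; split_ifs <;> omega
      refine h.no_fun 3 (by omega) (fun m => f (idx m)) ?_ ?_ ?_ ?_
      · exact Or.inl ⟨by simpa [hidx] using hx, by simpa [hidx] using hy⟩
      · intro i hi j hj hg
        have := (hf.cast_inj (hlt i) (hlt j)).mp hg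
        simp only [hidx] at this
        split_ifs at this <;>
          first
            | exact ‹False›.elim
            | omega
            | (simp only [false_and, and_false, or_false, false_or, and_true, true_and,
                 not_false_eq_true] at this; first | trivial | omega)
      · intro i hi
        rw [H4_G_adj h hk hf hx hjyk hy (hlt i) (hlt (i+1))]
        simp only [hidx]
        split_ifs <;>
          first
            | exact ‹False›.elim
            | omega
            | (simp only [false_and, and_false, or_false, false_or, and_true, true_and,
               not_false_eq_true]; first | trivial | omega)
      · intro i j hi hj hij
        rw [H4_G_adj h hk hf hx hjyk hy (hlt i) (hlt j)]
        simp only [hidx]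
        split_ifs <;>
          first
            | exact ‹False›.elim
            | omega
            | (simp only [false_and, and_false, or_false, false_or, and_true, true_and,
               not_false_eq_true]; first | trivial | omega)

lemma H4 (h : IsTwoPair G x y) {k : ℕ} (hk : 5 ≤ k) {f : ZMod k → V}
    (hf : IsInducedCycle (G ⊔ SimpleGraph.fromEdgeSet {s(x, y)})ᶜ k f) {a b : ZMod k}
    (ha : f a = x) (hb : f b = y) : False := by
  haveI : NeZero k := ⟨by omega⟩
  obtain ⟨hne, hnadj, -⟩ := id h
  have hxy' : (G ⊔ SimpleGraph.fromEdgeSet {s(x, y)}).Adj x y :=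
    (sup_edge_adj hne x y).mpr (Or.inr (Or.inl ⟨rfl, rfl⟩))
  have hncadj : ¬ (G ⊔ SimpleGraph.fromEdgeSet {s(x, y)})ᶜ.Adj x y := fun hc => hc.2 hxy'
  have hA : IsInducedCycle (G ⊔ SimpleGraph.fromEdgeSet {s(x, y)})ᶜ k (fun i => f (a + i)) :=
    hf.shift a
  have hA0 : f (a + 0) = x := by simpa using ha
  set d : ZMod k := b - a with hd
  have hAd : f (a + d) = y := by rw [show a + d = b by rw [hd]; ring]; exact hb
  set j : ℕ := d.val with hj
  have hjk : j < k := ZMod.val_lt d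
  have hdj : (j : ZMod k) = d := ZMod.natCast_zmod_val d
  have hj0 : j ≠ 0 := by
    intro h0
    apply hne
    rw [← hA0, ← hAd, ← hdj, h0, Nat.cast_zero]
  have hj1 : j ≠ 1 := by
    intro h1
    have hd1 : d = 1 := by rw [← hdj, h1, Nat.cast_one]
    have hadj01 : (G ⊔ SimpleGraph.fromEdgeSet {s(x, y)})ᶜ.Adj (f (a + 0)) (f (a + 1)) :=
      (hA.2 0 1).mpr (Or.inl (by ring))
    rw [hd1] at hAd
    rw [hA0, hAd] at hadj01
    exact hncadj hadj01
  have hjk1 : j ≠ k - 1 := by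
    intro h1
    have hdm : d = -1 := by
      rw [← hdj, h1, Nat.cast_sub (by omega), ZMod.natCast_self, Nat.cast_one]
      ring
    have hadj01 : (G ⊔ SimpleGraph.fromEdgeSet {s(x, y)})ᶜ.Adj (f (a + d)) (f (a + 0)) :=
      (hA.2 d 0).mpr (Or.inl (by rw [hdm]; ring))
    rw [hA0, hAd] at hadj01
    exact hncadj hadj01.symm
  by_cases hcase : j = 2 ∨ j ≤ k - 3
  · refine H4core h hk hA (by simpa using ha) (jy := j) ?_ (by omega) hcase
    show f (a + (j : ZMod k)) = y
    rw [hdj]; exact hAd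
  · -- j = k - 2 : reflect
    have hjj : j = k - 2 := by omega
    refine H4core h hk hA.reflect (by simpa using ha) (jy := k - j) ?_ (by omega) (by omega)
    show f (a + -((k - j : ℕ) : ZMod k)) = y
    have hc : ((k - j : ℕ) : ZMod k) = -d := by
      rw [Nat.cast_sub hjk.le, ZMod.natCast_self, hdj]; ring
    rw [hc, neg_neg]
    exact hAd

end Main

/-- Spinrad–Sritharan: if `{x, y}` is a two-pair of `G`, then `G` is weakly chordal
iff `G + xy` is weakly chordal. -/
theorem weaklyChordal_iff_addEdge_of_twoPair {V : Type*} (G : SimpleGraph V) (x y : V)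
    (h : IsTwoPair G x y) :
    WeaklyChordal G ↔ WeaklyChordal (G ⊔ SimpleGraph.fromEdgeSet {s(x, y)}) := by
  obtain ⟨hne, hnadjxy, -⟩ := id h
  constructor
  · intro hG
    constructor
    · intro k hk f hf
      by_cases hc : ∃ t : ZMod k, (f t = x ∧ f (t+1) = y) ∨ (f t = y ∧ f (t+1) = x)
      · obtain ⟨t, hp⟩ := hc; exact H3 h hk hf hp
      · refine hG.1 k hk f ⟨hf.1, fun i j => ?_⟩
        constructor
        · intro hadj
          exact (hf.2 i j).mp ((sup_edge_adj hne _ _).mpr (Or.inl hadj))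
        · intro hcons
          rcases (sup_edge_adj hne _ _).mp ((hf.2 i j).mpr hcons) with hadj | ⟨hx1, hy1⟩ | ⟨hy1, hx1⟩
          · exact hadj
          · exfalso; apply hc
            rcases hcons with rfl | rfl
            · exact ⟨i, Or.inl ⟨hx1, hy1⟩⟩
            · exact ⟨j, Or.inr ⟨hy1, hx1⟩⟩
          · exfalso; apply hc
            rcases hcons with rfl | rfl
            · exact ⟨i, Or.inr ⟨hy1, hx1⟩⟩
            · exact ⟨j, Or.inl ⟨hx1, hy1⟩⟩
    · intro k hk f hf
      by_cases hc : (∃ a : ZMod k, f a = x) ∧ (∃ b : ZMod k, f b = y)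
      · obtain ⟨⟨a, ha⟩, ⟨b, hb⟩⟩ := hc; exact H4 h hk hf ha hb
      · refine hG.2 k hk f ⟨hf.1, fun i j => ?_⟩
        have hnp : ¬((f i = x ∧ f j = y) ∨ (f i = y ∧ f j = x)) := by
          rintro (⟨h1, h2⟩ | ⟨h1, h2⟩)
          exacts [hc ⟨⟨i, h1⟩, ⟨j, h2⟩⟩, hc ⟨⟨j, h2⟩, ⟨i, h1⟩⟩]
        rw [← hf.2 i j, SimpleGraph.compl_adj, SimpleGraph.compl_adj, sup_edge_adj hne]
        tauto
  · intro hG'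
    constructor
    · intro k hk f hf
      by_cases hc : (∃ a : ZMod k, f a = x) ∧ (∃ b : ZMod k, f b = y)
      · obtain ⟨⟨a, ha⟩, ⟨b, hb⟩⟩ := hc; exact H1 h hk hf ha hb
      · refine hG'.1 k hk f ⟨hf.1, fun i j => ?_⟩
        have hnp : ¬((f i = x ∧ f j = y) ∨ (f i = y ∧ f j = x)) := by
          rintro (⟨h1, h2⟩ | ⟨h1, h2⟩)
          exacts [hc ⟨⟨i, h1⟩, ⟨j, h2⟩⟩, hc ⟨⟨j, h2⟩, ⟨i, h1⟩⟩]
        rw [← hf.2 i j, sup_edge_adj hne]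
        tauto
    · intro k hk f hf
      by_cases hc : (∃ a : ZMod k, f a = x) ∧ (∃ b : ZMod k, f b = y)
      · obtain ⟨⟨a, ha⟩, ⟨b, hb⟩⟩ := hc; exact H2 h hk hf ha hb
      · refine hG'.2 k hk f ⟨hf.1, fun i j => ?_⟩
        have hnp : ¬((f i = x ∧ f j = y) ∨ (f i = y ∧ f j = x)) := by
          rintro (⟨h1, h2⟩ | ⟨h1, h2⟩)
          exacts [hc ⟨⟨i, h1⟩, ⟨j, h2⟩⟩, hc ⟨⟨j, h2⟩, ⟨i, h1⟩⟩]
        rw [← hf.2 i j, SimpleGraph.compl_adj, SimpleGraph.compl_adj, sup_edge_adj hne]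
        tauto
end

section
/- Every ordering of the vertices of a graph G produced by Maximum Cardinality Search (at each step, pick an unvisited vertex with the maximum number of visited neighbors) satisfies the MNS 3-point condition: if a \prec b \prec c, ac \in E and ab \notin E, then there exists d \prec b with db \in E and dc \notin E. -/
/-- Every MCS ordering (each successive vertex has a maximum number of already-visited
neighbors among the unvisited vertices) satisfies the MNS 3-point condition. -/
theorem mcs_satisfies_mns {V : Type*} [Fintype V] (G : SimpleGraph V)
    (σ : Fin (Fintype.card V) ≃ V)
    (hmcs : ∀ i j : Fin (Fintype.card V), i ≤ j →
      ({k : Fin (Fintype.card V) | k < i ∧ G.Adj (σ k) (σ j)}).ncard ≤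
        ({k : Fin (Fintype.card V) | k < i ∧ G.Adj (σ k) (σ i)}).ncard) :
    ∀ a b c : Fin (Fintype.card V), a < b → b < c →
      G.Adj (σ a) (σ c) → ¬ G.Adj (σ a) (σ b) →
      ∃ d, d < b ∧ G.Adj (σ d) (σ b) ∧ ¬ G.Adj (σ d) (σ c) := by
  intro a b c hab hbc hac hnab
  by_contra! hinherit
  -- The visited neighbours of b are among those of c, and MCS chose b over c, so they coincide.
  have hsame : {k | k < b ∧ G.Adj (σ k) (σ b)} = {k | k < b ∧ G.Adj (σ k) (σ c)} :=
    Set.eq_of_subset_of_ncard_le (fun k ⟨hkb, hadj⟩ => ⟨hkb, hinherit k hkb hadj⟩)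
      (hmcs b c hbc.le)
  have ha : a ∈ {k | k < b ∧ G.Adj (σ k) (σ b)} := hsame ▸ ⟨hab, hac⟩
  exact hnab ha.2
end

section
/- Let G be a split graph with clique C and independent set I, and let \sigma be an ordering of V satisfying the MNS 3-point condition in which the first vertex is in C. Then in \sigma, every vertex of I that appears before the last vertex of C has all of its earlier clique vertices as neighbors. -/
/-!
If an earlier clique vertex `k` missed the independent vertex `i`, the clique vertex `j` after `i`
would witness the MNS condition for `k ≺ i ≺ j`, yielding `d ≺ i` adjacent to `i` but not to `j`.
Being adjacent to a vertex of `I`, `d` lies in `C`, so it is adjacent to `j` after all.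
-/

section SplitGraph

variable {V : Type*} {G : SimpleGraph V} {C I : Set V}

lemma mem_of_adj_of_mem_indep (hCI : ∀ x, x ∈ C ∨ x ∈ I) (hI : ∀ a ∈ I, ∀ b ∈ I, ¬ G.Adj a b)
    {x y : V} (hy : y ∈ I) (hxy : G.Adj x y) : x ∈ C :=
  (hCI x).resolve_right fun hx => hI x hx y hy hxy

lemma adj_of_mns_of_mem_clique_of_lt {α : Type*} [LinearOrder α]
    (hCI : ∀ x, x ∈ C ∨ x ∈ I) (hC : G.IsClique C) (hI : ∀ a ∈ I, ∀ b ∈ I, ¬ G.Adj a b)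
    {σ : α → V} (hσ : Function.Injective σ)
    (hmns : ∀ a b c : α, a < b → b < c → G.Adj (σ a) (σ c) → ¬ G.Adj (σ a) (σ b) →
      ∃ d, d < b ∧ G.Adj (σ d) (σ b) ∧ ¬ G.Adj (σ d) (σ c))
    {k i j : α} (hki : k < i) (hij : i < j) (hk : σ k ∈ C) (hi : σ i ∈ I) (hj : σ j ∈ C) :
    G.Adj (σ k) (σ i) := by
  by_contra hki_adj
  obtain ⟨d, hdi, hd_adj_i, hd_nadj_j⟩ :=
    hmns k i j hki hij (hC hk hj (hσ.ne (hki.trans hij).ne)) hki_adj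
  have hd : σ d ∈ C := mem_of_adj_of_mem_indep hCI hI hi hd_adj_i
  exact hd_nadj_j (hC hd hj (hσ.ne (hdi.trans hij).ne))

end SplitGraph

theorem mns_split_start_clique_earlier_neighbors_general {V : Type*} [Fintype V]
    (G : SimpleGraph V) (C I : Set V)
    (hpart : ∀ x : V, (x ∈ C ∨ x ∈ I) ∧ ¬ (x ∈ C ∧ x ∈ I))
    (hC : G.IsClique C) (hI : ∀ a ∈ I, ∀ b ∈ I, ¬ G.Adj a b)
    (σ : Fin (Fintype.card V) ≃ V)
    (hmns : ∀ a b c : Fin (Fintype.card V), a < b → b < c →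
      G.Adj (σ a) (σ c) → ¬ G.Adj (σ a) (σ b) →
      ∃ d, d < b ∧ G.Adj (σ d) (σ b) ∧ ¬ G.Adj (σ d) (σ c)) :
    ∀ i : Fin (Fintype.card V), σ i ∈ I → (∃ j, i < j ∧ σ j ∈ C) →
      ∀ k, k < i → σ k ∈ C → G.Adj (σ k) (σ i) := by
  rintro i hi ⟨j, hij, hj⟩ k hki hk
  exact adj_of_mns_of_mem_clique_of_lt (fun x => (hpart x).1) hC hI σ.injective hmns hki hij hk hi hj

/-- In an MNS ordering of a split graph starting at a clique vertex, every
independent-set vertex that appears before the last clique vertex is adjacent to all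
clique vertices that appear before it. -/
theorem mns_split_start_clique_earlier_neighbors {V : Type*} [Fintype V]
    (G : SimpleGraph V) (C I : Set V)
    (hpart : ∀ x : V, (x ∈ C ∨ x ∈ I) ∧ ¬ (x ∈ C ∧ x ∈ I))
    (hC : G.IsClique C) (hI : ∀ a ∈ I, ∀ b ∈ I, ¬ G.Adj a b)
    (hn : 0 < Fintype.card V) (σ : Fin (Fintype.card V) ≃ V)
    (hstart : σ ⟨0, hn⟩ ∈ C)
    (hmns : ∀ a b c : Fin (Fintype.card V), a < b → b < c →
      G.Adj (σ a) (σ c) → ¬ G.Adj (σ a) (σ b) →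
      ∃ d, d < b ∧ G.Adj (σ d) (σ b) ∧ ¬ G.Adj (σ d) (σ c)) :
    ∀ i : Fin (Fintype.card V), σ i ∈ I → (∃ j, i < j ∧ σ j ∈ C) →
      ∀ k, k < i → σ k ∈ C → G.Adj (σ k) (σ i) :=
  mns_split_start_clique_earlier_neighbors_general G C I hpart hC hI σ hmns
end
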